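/- Let u, v, w be orthonormal vectors in ℝ⁷. Then χ(u,v,w) is orthogonal to each of u, v, w, and χ(u,v,w) = 0 if and only if φ₀(u,v,w)² = 1 (i.e., if and only if the 3-plane spanned by u, v, w is associative, meaning φ₀ restricts to it as ± its volume form). -/
import Mathlib


open scoped RealInnerProductSpace

noncomputable section

/-- `V7` is ℝ⁷ with its Euclidean inner product. -/
abbrev V7 : Type := EuclideanSpace ℝ (Fin 7)

/-- Evaluation of the wedge product `eⁱ ∧ eʲ ∧ eᵏ` of dual basis 1-forms on three vectors. -/
def w3 (i j k : Fin 7) (u v w : V7) : ℝ :=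
  Matrix.det !![u i, u j, u k; v i, v j, v k; w i, w j, w k]

/-- Evaluation of the wedge product `eⁱ ∧ eʲ ∧ eᵏ ∧ eˡ` on four vectors. -/
def w4 (i j k l : Fin 7) (u v w z : V7) : ℝ :=
  Matrix.det !![u i, u j, u k, u l; v i, v j, v k, v l;
                w i, w j, w k, w l; z i, z j, z k, z l]

/-- The standard G₂ 3-form φ₀ = e¹²³+e¹⁴⁵+e¹⁶⁷+e²⁴⁶−e²⁵⁷−e³⁴⁷−e³⁵⁶ (0-indexed). -/
def phi0 (u v w : V7) : ℝ :=
  w3 0 1 2 u v w + w3 0 3 4 u v w + w3 0 5 6 u v w + w3 1 3 5 u v w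
    - w3 1 4 6 u v w - w3 2 3 6 u v w - w3 2 4 5 u v w

/-- The 4-form ψ₀ = ∗φ₀ = e⁴⁵⁶⁷+e²³⁶⁷+e²³⁴⁵+e¹³⁵⁷−e¹³⁴⁶−e¹²⁵⁶−e¹²⁴⁷ (0-indexed). -/
def psi0 (u v w z : V7) : ℝ :=
  w4 3 4 5 6 u v w z + w4 1 2 5 6 u v w z + w4 1 2 3 4 u v w z + w4 0 2 4 6 u v w z
    - w4 0 2 3 5 u v w z - w4 0 1 4 5 u v w z - w4 0 1 3 6 u v w z

lemma my_det_fin_four (A : Matrix (Fin 4) (Fin 4) ℝ) :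
    A.det =
      A 0 0*A 1 1*A 2 2*A 3 3
      - A 0 0*A 1 1*A 2 3*A 3 2
      - A 0 0*A 1 2*A 2 1*A 3 3
      + A 0 0*A 1 2*A 2 3*A 3 1
      + A 0 0*A 1 3*A 2 1*A 3 2
      - A 0 0*A 1 3*A 2 2*A 3 1
      - A 0 1*A 1 0*A 2 2*A 3 3
      + A 0 1*A 1 0*A 2 3*A 3 2
      + A 0 1*A 1 2*A 2 0*A 3 3
      - A 0 1*A 1 2*A 2 3*A 3 0
      - A 0 1*A 1 3*A 2 0*A 3 2
      + A 0 1*A 1 3*A 2 2*A 3 0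
      + A 0 2*A 1 0*A 2 1*A 3 3
      - A 0 2*A 1 0*A 2 3*A 3 1
      - A 0 2*A 1 1*A 2 0*A 3 3
      + A 0 2*A 1 1*A 2 3*A 3 0
      + A 0 2*A 1 3*A 2 0*A 3 1
      - A 0 2*A 1 3*A 2 1*A 3 0
      - A 0 3*A 1 0*A 2 1*A 3 2
      + A 0 3*A 1 0*A 2 2*A 3 1
      + A 0 3*A 1 1*A 2 0*A 3 2
      - A 0 3*A 1 1*A 2 2*A 3 0
      - A 0 3*A 1 2*A 2 0*A 3 1
      + A 0 3*A 1 2*A 2 1*A 3 0 := by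
  rw [Matrix.det_succ_row_zero]
  simp [Fin.sum_univ_succ, Matrix.det_fin_three, Matrix.submatrix_apply, Fin.succAbove]
  norm_num [show (Fin.succ 2 : Fin 4) = 3 from rfl, show ((2 : Fin 3).castSucc : Fin 4) = 2 from rfl,
    show ((if (1:Fin 4) < Fin.succ 2 then 1 else 2) : Fin 4) = 1 from rfl, show ((if (1:Fin 4) < 3 then 1 else 2) : Fin 4) = 1 from rfl]
  ring

lemma det4_of (a00 a01 a02 a03 a10 a11 a12 a13 a20 a21 a22 a23 a30 a31 a32 a33 : ℝ) :
    Matrix.det !![a00,a01,a02,a03; a10,a11,a12,a13; a20,a21,a22,a23; a30,a31,a32,a33] =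
      a00*a11*a22*a33
      - a00*a11*a23*a32
      - a00*a12*a21*a33
      + a00*a12*a23*a31
      + a00*a13*a21*a32
      - a00*a13*a22*a31
      - a01*a10*a22*a33
      + a01*a10*a23*a32
      + a01*a12*a20*a33
      - a01*a12*a23*a30
      - a01*a13*a20*a32
      + a01*a13*a22*a30
      + a02*a10*a21*a33
      - a02*a10*a23*a31
      - a02*a11*a20*a33
      + a02*a11*a23*a30
      + a02*a13*a20*a31
      - a02*a13*a21*a30
      - a03*a10*a21*a32
      + a03*a10*a22*a31
      + a03*a11*a20*a32
      - a03*a11*a22*a30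
      - a03*a12*a20*a31
      + a03*a12*a21*a30 := by
  rw [my_det_fin_four]
  simp [Matrix.cons_val_zero, Matrix.cons_val_one, Matrix.cons_val_two, Matrix.cons_val_three,
    Matrix.head_cons, Matrix.tail_cons]

lemma det3_of (a00 a01 a02 a10 a11 a12 a20 a21 a22 : ℝ) :
    Matrix.det !![a00,a01,a02; a10,a11,a12; a20,a21,a22] =
      a00*a11*a22 - a00*a12*a21 - a01*a10*a22 + a01*a12*a20 + a02*a10*a21 - a02*a11*a20 := by
  rw [Matrix.det_fin_three]
  simp [Matrix.cons_val_zero, Matrix.cons_val_one, Matrix.cons_val_two,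
    Matrix.head_cons, Matrix.tail_cons]

lemma psi0_self_left (u v w : V7) : psi0 u v w u = 0 := by
  simp only [psi0, w4, det4_of]
  ring

lemma psi0_self_mid (u v w : V7) : psi0 u v w v = 0 := by
  simp only [psi0, w4, det4_of]
  ring

lemma psi0_self_right (u v w : V7) : psi0 u v w w = 0 := by
  simp only [psi0, w4, det4_of]
  ring

set_option maxHeartbeats 4000000 in
lemma key_identity (u v w : V7) :
    (∑ i : Fin 7, psi0 u v w (EuclideanSpace.single i 1) ^ 2) + phi0 u v w ^ 2 =
      ⟪u, u⟫ * ⟪v, v⟫ * ⟪w, w⟫ + 2 * ⟪u, v⟫ * ⟪u, w⟫ * ⟪v, w⟫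
        - ⟪u, u⟫ * ⟪v, w⟫ ^ 2 - ⟪v, v⟫ * ⟪u, w⟫ ^ 2 - ⟪w, w⟫ * ⟪u, v⟫ ^ 2 := by
  simp only [psi0, w4, phi0, w3, det4_of, det3_of, PiLp.inner_apply, RCLike.inner_apply,
    conj_trivial, Fin.sum_univ_seven, EuclideanSpace.single_apply, Fin.reduceEq, reduceIte,
    mul_zero, zero_mul, mul_one, one_mul, add_zero, zero_add, sub_zero, zero_sub, neg_zero]
  ring

theorem chi_orthogonal_and_vanishing_iff_associative
    (chi : V7 → V7 → V7 → V7)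
    (hchi : ∀ u v w z : V7, ⟪chi u v w, z⟫ = psi0 u v w z)
    (u v w : V7) (hu : ‖u‖ = 1) (hv : ‖v‖ = 1) (hw : ‖w‖ = 1)
    (huv : ⟪u, v⟫ = (0 : ℝ)) (huw : ⟪u, w⟫ = (0 : ℝ)) (hvw : ⟪v, w⟫ = (0 : ℝ)) :
    ⟪chi u v w, u⟫ = (0 : ℝ) ∧ ⟪chi u v w, v⟫ = (0 : ℝ) ∧ ⟪chi u v w, w⟫ = (0 : ℝ) ∧
      (chi u v w = 0 ↔ phi0 u v w ^ 2 = 1) := by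
  have huu : ⟪u, u⟫ = (1 : ℝ) := by
    rw [real_inner_self_eq_norm_sq, hu]; norm_num
  have hvv : ⟪v, v⟫ = (1 : ℝ) := by
    rw [real_inner_self_eq_norm_sq, hv]; norm_num
  have hww : ⟪w, w⟫ = (1 : ℝ) := by
    rw [real_inner_self_eq_norm_sq, hw]; norm_num
  refine ⟨by rw [hchi]; exact psi0_self_left u v w,
    by rw [hchi]; exact psi0_self_mid u v w,
    by rw [hchi]; exact psi0_self_right u v w, ?_⟩
  have hcoord : ∀ i : Fin 7, chi u v w i = psi0 u v w (EuclideanSpace.single i 1) := by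
    intro i
    rw [← hchi]
    simp [PiLp.inner_apply, EuclideanSpace.single_apply]
  have hnorm : ⟪chi u v w, chi u v w⟫ = 1 - phi0 u v w ^ 2 := by
    have h1 : ⟪chi u v w, chi u v w⟫ = ∑ i : Fin 7,
        psi0 u v w (EuclideanSpace.single i 1) ^ 2 := by
      rw [PiLp.inner_apply]
      refine Finset.sum_congr rfl fun i _ => ?_
      rw [hcoord i]
      simp [sq]
    have h2 := key_identity u v w
    rw [huu, hvv, hww, huv, huw, hvw] at h2
    rw [h1]
    linarith
  constructor
  · intro h
    rw [h] at hnorm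
    simp at hnorm
    linarith
  · intro h
    rw [← @inner_self_eq_zero ℝ, hnorm, h]
    ring
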